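/- (Even-level singular vector equations, from the proof of Theorem 3.3) For every positive integer n and all α, β ∈ ℂ, the vector u = β·e(n,0,0) + α·e(n−1,1,1) satisfies A₋u = c₊u = c₋u = 0 if and only if the following four equations hold: nβ + α(h+2n−f) = 0, nβ − α(h+f) = 0, nβ(h+n−1) + α(h+f) = 0, and α(n−1)(h+n) = 0. -/

import Mathlib

/-!
Verma module `M(h,f)` over the ℤ₂×ℤ₂ graded superalgebra of Rittenberg–Wyler,
realized on the space of finitely supported functions `ℕ × Fin 2 × Fin 2 →₀ ℂ`,
with basis vectors `e k μ ν`.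
-/

noncomputable section

/-- Index set for the basis of the Verma module. -/
abbrev Idx : Type := ℕ × Fin 2 × Fin 2

/-- The underlying space of the Verma module `M(h,f)`. -/
abbrev Mmod : Type := Idx →₀ ℂ

/-- The standard basis vector `e(k,μ,ν)`. -/
def e (k : ℕ) (μ ν : Fin 2) : Mmod := Finsupp.single (k, μ, ν) 1

/-- Build a linear operator on `Mmod` from its values on basis vectors. -/
def mkOp (φ : Idx → Mmod) : Mmod →ₗ[ℂ] Mmod := Finsupp.lift Mmod ℂ Idx φ

/-- The lowering operator `A₋`.
`A₋ e(k,μ,ν) = 4k(h+k+μ+ν−1)·e(k−1,μ,ν) + 4(h+f)·δ_{μ,1}δ_{ν,1}·e(k,0,0)`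
(with the convention `e(−1,μ,ν) = 0`, automatic since the coefficient vanishes at `k = 0`). -/
def Am (h f : ℂ) : Mmod →ₗ[ℂ] Mmod :=
  mkOp fun p =>
    (4 * (p.1 : ℂ) * (h + (p.1 : ℂ) + ((p.2.1 : ℕ) : ℂ) + ((p.2.2 : ℕ) : ℂ) - 1))
        • e (p.1 - 1) p.2.1 p.2.2
    + (if p.2.1 = 1 ∧ p.2.2 = 1 then (4 * (h + f)) • e p.1 0 0 else 0)

/-- The lowering operator `c₊`.
`c₊ e(k,μ,ν) = 2(h+2k+2ν−f)·δ_{μ,1}·e(k,0,ν) + (−1)^μ·2k·δ_{ν,0}·e(k−1,μ,1)`. -/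
def cp (h f : ℂ) : Mmod →ₗ[ℂ] Mmod :=
  mkOp fun p =>
    (if p.2.1 = 1 then
        (2 * (h + 2 * (p.1 : ℂ) + 2 * ((p.2.2 : ℕ) : ℂ) - f)) • e p.1 0 p.2.2 else 0)
    + (if p.2.2 = 0 then
        ((-1 : ℂ) ^ (p.2.1 : ℕ) * (2 * (p.1 : ℂ))) • e (p.1 - 1) p.2.1 1 else 0)

/-- The lowering operator `c₋`.
`c₋ e(k,μ,ν) = (−1)^μ·2(h+f)·δ_{ν,1}·e(k,μ,0) + 2k·δ_{μ,0}·e(k−1,1,ν)`. -/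
def cm (h f : ℂ) : Mmod →ₗ[ℂ] Mmod :=
  mkOp fun p =>
    (if p.2.2 = 1 then
        ((-1 : ℂ) ^ (p.2.1 : ℕ) * (2 * (h + f))) • e p.1 p.2.1 0 else 0)
    + (if p.2.1 = 0 then (2 * (p.1 : ℂ)) • e (p.1 - 1) 1 p.2.2 else 0)

/-- The raising operator `A₊`: `A₊ e(k,μ,ν) = e(k+1,μ,ν)`. -/
def Ap : Mmod →ₗ[ℂ] Mmod := mkOp fun p => e (p.1 + 1) p.2.1 p.2.2

/-- The raising operator `d₊`: `d₊ e(k,μ,ν) = δ_{μ,0}·e(k,1,ν)`. -/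
def dp : Mmod →ₗ[ℂ] Mmod := mkOp fun p => if p.2.1 = 0 then e p.1 1 p.2.2 else 0

/-- The raising operator `d₋`:
`d₋ e(k,μ,ν) = (−1)^μ·δ_{ν,0}·e(k,μ,1) + 2·δ_{μ,1}·e(k+1,0,ν)`. -/
def dm : Mmod →ₗ[ℂ] Mmod :=
  mkOp fun p =>
    (if p.2.2 = 0 then ((-1 : ℂ) ^ (p.2.1 : ℕ)) • e p.1 p.2.1 1 else 0)
    + (if p.2.1 = 1 then (2 : ℂ) • e (p.1 + 1) 0 p.2.2 else 0)

/-- The Cartan operator `N`: `N e(k,μ,ν) = (h+2k+μ+ν)·e(k,μ,ν)`. -/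
def Nop (h : ℂ) : Mmod →ₗ[ℂ] Mmod :=
  mkOp fun p =>
    (h + 2 * (p.1 : ℂ) + ((p.2.1 : ℕ) : ℂ) + ((p.2.2 : ℕ) : ℂ)) • e p.1 p.2.1 p.2.2

/-- The Cartan operator `F̃`: `F̃ e(k,μ,ν) = (f+μ−ν)·e(k,μ,ν)`. -/
def Fop (f : ℂ) : Mmod →ₗ[ℂ] Mmod :=
  mkOp fun p =>
    (f + ((p.2.1 : ℕ) : ℂ) - ((p.2.2 : ℕ) : ℂ)) • e p.1 p.2.1 p.2.2

/-- The set of basis vectors of level `m` (the level of `e(k,μ,ν)` is `2k+μ+ν`). -/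
def levelVecs (m : ℕ) : Set Mmod :=
  {v | ∃ (k : ℕ) (μ ν : Fin 2), 2 * k + (μ : ℕ) + (ν : ℕ) = m ∧ v = e k μ ν}

/-- `v` is a singular vector at level `m ≥ 1`: it is nonzero, lies in the span of the
level-`m` basis vectors, and is annihilated by `A₋`, `c₊` and `c₋`. -/
def IsSingular (h f : ℂ) (m : ℕ) (v : Mmod) : Prop :=
  1 ≤ m ∧ v ≠ 0 ∧ v ∈ Submodule.span ℂ (levelVecs m) ∧
    Am h f v = 0 ∧ cp h f v = 0 ∧ cm h f v = 0

/-! Each lowering operator maps `e(n,0,0)` and `e(n−1,1,1)` to multiples of the same one or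
two basis vectors, so each annihilation condition is the vanishing of one or two coefficients. -/

lemma mkOp_e (φ : Idx → Mmod) (k : ℕ) (μ ν : Fin 2) : mkOp φ (e k μ ν) = φ (k, μ, ν) := by
  simp [mkOp, e]

lemma smul_e_eq_zero_iff {a : ℂ} {k : ℕ} {μ ν : Fin 2} : a • e k μ ν = 0 ↔ a = 0 := by
  simp [e]

lemma smul_e_add_smul_e_eq_zero_iff {a b : ℂ} {k k' : ℕ} {μ ν μ' ν' : Fin 2}
    (hne : (k, μ, ν) ≠ (k', μ', ν')) : a • e k μ ν + b • e k' μ' ν' = 0 ↔ a = 0 ∧ b = 0 := by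
  refine ⟨fun hz => ⟨?_, ?_⟩, fun ⟨ha, hb⟩ => by simp [ha, hb]⟩
  · simpa [e, Finsupp.single_apply, hne] using DFunLike.congr_fun hz (k, μ, ν)
  · simpa [e, Finsupp.single_apply, hne] using DFunLike.congr_fun hz (k', μ', ν')

section BasisAction

variable (h f : ℂ) (k : ℕ)

lemma Am_e_zero_zero : Am h f (e k 0 0) = (4 * k * (h + k - 1)) • e (k - 1) 0 0 := by
  simp [Am, mkOp_e]

lemma Am_e_one_one :
    Am h f (e k 1 1) = (4 * k * (h + k + 1)) • e (k - 1) 1 1 + (4 * (h + f)) • e k 0 0 := by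
  simp [Am, mkOp_e]

lemma cp_e_zero_zero : cp h f (e k 0 0) = (2 * k : ℂ) • e (k - 1) 0 1 := by
  simp [cp, mkOp_e]

lemma cp_e_one_one : cp h f (e k 1 1) = (2 * (h + 2 * k + 2 - f)) • e k 0 1 := by
  simp [cp, mkOp_e]

lemma cm_e_zero_zero : cm h f (e k 0 0) = (2 * k : ℂ) • e (k - 1) 1 0 := by
  simp [cm, mkOp_e]

lemma cm_e_one_one : cm h f (e k 1 1) = (-(2 * (h + f))) • e k 1 0 := by
  simp [cm, mkOp_e]

end BasisAction

/-- Even-level singular vector equations (from the proof of Theorem 3.3):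
`u = β·e(n,0,0) + α·e(n−1,1,1)` is annihilated by `A₋`, `c₊`, `c₋` iff the four
equations hold. -/
theorem even_level_singular_equations (h f : ℂ) (n : ℕ) (hn : 1 ≤ n) (α β : ℂ) :
    (Am h f (β • e n 0 0 + α • e (n - 1) 1 1) = 0 ∧
     cp h f (β • e n 0 0 + α • e (n - 1) 1 1) = 0 ∧
     cm h f (β • e n 0 0 + α • e (n - 1) 1 1) = 0) ↔
    ((n : ℂ) * β + α * (h + 2 * (n : ℂ) - f) = 0 ∧
     (n : ℂ) * β - α * (h + f) = 0 ∧
     (n : ℂ) * β * (h + (n : ℂ) - 1) + α * (h + f) = 0 ∧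
     α * ((n : ℂ) - 1) * (h + (n : ℂ)) = 0) := by
  have hcast : ((n - 1 : ℕ) : ℂ) = n - 1 := by push_cast [Nat.cast_sub hn]; ring
  have hA : Am h f (β • e n 0 0 + α • e (n - 1) 1 1) =
      (4 * (n * β * (h + n - 1) + α * (h + f))) • e (n - 1) 0 0
        + (4 * (α * (n - 1) * (h + n))) • e (n - 1 - 1) 1 1 := by
    simp only [map_add, map_smul, Am_e_zero_zero, Am_e_one_one, hcast]
    module
  have hp : cp h f (β • e n 0 0 + α • e (n - 1) 1 1) =
      (2 * (n * β + α * (h + 2 * n - f))) • e (n - 1) 0 1 := by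
    simp only [map_add, map_smul, cp_e_zero_zero, cp_e_one_one, hcast]
    module
  have hm : cm h f (β • e n 0 0 + α • e (n - 1) 1 1) =
      (2 * (n * β - α * (h + f))) • e (n - 1) 1 0 := by
    simp only [map_add, map_smul, cm_e_zero_zero, cm_e_one_one]
    module
  rw [hA, hp, hm, smul_e_add_smul_e_eq_zero_iff (by simp), smul_e_eq_zero_iff,
    smul_e_eq_zero_iff]
  simp only [mul_eq_zero, OfNat.ofNat_ne_zero, false_or]
  tauto
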